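/- Suppose the vertex set S of Γ decomposes as a disjoint union S = S₁ ⊔ ⋯ ⊔ S_k such that any two vertices lying in different parts are joined in Γ by an edge labelled 2, and such that each Artin group A_{Γ_i} (induced subgraph Γ_i on S_i) is irreducible and satisfies the Weak Malnormality Conjecture. Then the direct product A_Γ ≅ A_{Γ₁} × ⋯ × A_{Γ_k} also satisfies the Weak Malnormality Conjecture. -/

import Mathlib

/-!
Common framework: Artin groups of labelled graphs.

A finite labelled graph `Γ` on vertex set `α` is encoded by a symmetric function
`M : α → α → ℕ`, where `M s t = 0` means `s` and `t` are not joined by an edge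
(label `∞`), and `M s t = m ≥ 2` means `s, t` are joined by an edge labelled `m`.
-/

namespace ArtinPaper

/-- The word `Π(s,t;m) = stst⋯` (`m` letters) in the free group. -/
def braidWord {α : Type*} (m : ℕ) (s t : α) : FreeGroup α :=
  ((List.range m).map (fun i => if i % 2 = 0 then FreeGroup.of s else FreeGroup.of t)).prod

/-- The Artin relations of the labelled graph `M`: `Π(s,t;m_{s,t}) = Π(t,s;m_{s,t})`
for every edge `{s,t}` (i.e. whenever `2 ≤ M s t`). -/
def artinRels {α : Type*} (M : α → α → ℕ) : Set (FreeGroup α) :=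
  { r | ∃ s t : α, 2 ≤ M s t ∧ r = braidWord (M s t) s t * (braidWord (M s t) t s)⁻¹ }

/-- The Artin group `A_Γ` of the labelled graph `M`. -/
abbrev ArtinGroup {α : Type*} (M : α → α → ℕ) : Type _ :=
  PresentedGroup (artinRels M)

/-- The image in `A_Γ` of the generator `s`. -/
def agen {α : Type*} (M : α → α → ℕ) (s : α) : ArtinGroup M :=
  PresentedGroup.of s

/-- The standard parabolic subgroup `A_T` of `A_Γ`, for `T ⊆ S`. -/
def standardParabolic {α : Type*} (M : α → α → ℕ) (T : Set α) :
    Subgroup (ArtinGroup M) :=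
  Subgroup.closure (agen M '' T)

/-- The conjugate `g H g⁻¹` of a subgroup. -/
def conjSub {G : Type*} [Group G] (g : G) (H : Subgroup G) : Subgroup G :=
  H.map (MulAut.conj g).toMonoidHom

/-- A parabolic subgroup of `A_Γ` is a conjugate `g A_T g⁻¹` of a standard parabolic. -/
def IsParabolic {α : Type*} (M : α → α → ℕ) (H : Subgroup (ArtinGroup M)) : Prop :=
  ∃ (g : ArtinGroup M) (T : Set α), H = conjSub g (standardParabolic M T)

/-- A subgroup `H ≤ G` is weakly malnormal if some conjugate intersects it in a finite set. -/
def WeaklyMalnormal {G : Type*} [Group G] (H : Subgroup G) : Prop :=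
  ∃ g : G, (((H ⊓ conjSub g H : Subgroup G) : Set G)).Finite

/-- `A_Γ` is reducible if `S` is partitioned into two nonempty parts joined entirely
by edges labelled `2`. -/
def IsReducible {α : Type*} (M : α → α → ℕ) : Prop :=
  ∃ S₁ S₂ : Set α, S₁.Nonempty ∧ S₂.Nonempty ∧ Disjoint S₁ S₂ ∧
    S₁ ∪ S₂ = Set.univ ∧ ∀ s ∈ S₁, ∀ t ∈ S₂, M s t = 2

/-- The labelled graph induced on a subset `T` of the vertices. -/
def restrict {α : Type*} (M : α → α → ℕ) (T : Set α) : T → T → ℕ :=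
  fun s t => M s t

/-- An Artin group satisfies the Intersection Property if the intersection of any two
of its parabolic subgroups is again a parabolic subgroup. -/
def SatisfiesIP {α : Type*} (M : α → α → ℕ) : Prop :=
  ∀ H K : Subgroup (ArtinGroup M),
    IsParabolic M H → IsParabolic M K → IsParabolic M (H ⊓ K)

/-- A visual splitting `A_Γ = A_{Γ₁} *_{A_Ω} A_{Γ₂}`: two proper subsets of vertices
covering `S` such that each edge has both endpoints in `S₁` or both in `S₂`
(here `Ω = S₁ ∩ S₂`). -/
def VisualSplitting {α : Type*} (M : α → α → ℕ) (S₁ S₂ : Set α) : Prop :=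
  S₁ ≠ Set.univ ∧ S₂ ≠ Set.univ ∧ S₁ ∪ S₂ = Set.univ ∧
    ∀ s t : α, 2 ≤ M s t → (s ∈ S₁ ∧ t ∈ S₁) ∨ (s ∈ S₂ ∧ t ∈ S₂)

/-- `S₁` spans a direct factor of `A_Γ`: `∅ ≠ S₁ ⊊ S` and every vertex of `S₁` is joined
to every vertex of `S ∖ S₁` by an edge labelled `2`. -/
def IsDirectFactorSet {α : Type*} (M : α → α → ℕ) (S₁ : Set α) : Prop :=
  S₁.Nonempty ∧ S₁ ≠ Set.univ ∧ ∀ s ∈ S₁, ∀ t ∉ S₁, M s t = 2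

/-- The Weak Malnormality Conjecture for `A_Γ`: a proper standard parabolic subgroup
is weakly malnormal iff it does not contain a standard parabolic subgroup that is a
direct factor of `A_Γ`. -/
def SatisfiesWMC {α : Type*} (M : α → α → ℕ) : Prop :=
  ∀ T : Set α, T ≠ Set.univ →
    (WeaklyMalnormal (standardParabolic M T) ↔
      ¬ ∃ S₁ : Set α, IsDirectFactorSet M S₁ ∧
        standardParabolic M S₁ ≤ standardParabolic M T)

/-- The relations of the Coxeter group `W_Γ`: the Artin relations together with `s² = 1`. -/
def coxeterRels {α : Type*} (M : α → α → ℕ) : Set (FreeGroup α) :=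
  artinRels M ∪ { r | ∃ s : α, r = FreeGroup.of s * FreeGroup.of s }

/-- The Coxeter group `W_Γ`, the quotient of `A_Γ` by the relations `s² = 1`. -/
abbrev CoxGroup {α : Type*} (M : α → α → ℕ) : Type _ :=
  PresentedGroup (coxeterRels M)

end ArtinPaper
namespace ArtinPaper

/-! ### Auxiliary development -/

section Basic
variable {α : Type*} {M : α → α → ℕ}

theorem hom_braidWord {G : Type*} [Group G] (F : FreeGroup α →* G) (m : ℕ) (s t : α) :
    F (braidWord m s t)
      = ((List.range m).map (fun i => if i % 2 = 0 then F (FreeGroup.of s)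
          else F (FreeGroup.of t))).prod := by
  unfold braidWord
  rw [map_list_prod, List.map_map]
  refine congrArg List.prod (List.map_congr_left ?_)
  intro i _
  by_cases h : i % 2 = 0 <;> simp [h]

theorem mk_rel_eq_one {rels : Set (FreeGroup α)} {r : FreeGroup α} (h : r ∈ rels) :
    PresentedGroup.mk rels r = 1 :=
  (QuotientGroup.eq_one_iff _).mpr (Subgroup.subset_normalClosure h)

theorem mk_braid_eq {s t : α} (h2 : 2 ≤ M s t) :
    PresentedGroup.mk (artinRels M) (braidWord (M s t) s t)
      = PresentedGroup.mk (artinRels M) (braidWord (M s t) t s) := by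
  have h := mk_rel_eq_one (rels := artinRels M) ⟨s, t, h2, rfl⟩
  rw [map_mul, map_inv, mul_inv_eq_one] at h
  exact h

theorem braidWord_two (s t : α) : braidWord 2 s t = FreeGroup.of s * FreeGroup.of t := by
  simp [braidWord, List.range_succ]

theorem agen_comm {s t : α} (h : M s t = 2) :
    agen M s * agen M t = agen M t * agen M s := by
  have h2 : 2 ≤ M s t := h.ge
  have hb := mk_braid_eq (M := M) h2
  rw [h, braidWord_two, braidWord_two, map_mul, map_mul] at hb
  exact hb

/-- The homomorphism `A_Γ → ℤ` sending each generator to `1`. -/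
noncomputable def nu (M : α → α → ℕ) : ArtinGroup M →* Multiplicative ℤ :=
  PresentedGroup.toGroup (f := fun _ => Multiplicative.ofAdd (1 : ℤ)) (by
    rintro r ⟨s, t, h2, rfl⟩
    rw [map_mul, map_inv, mul_inv_eq_one, hom_braidWord, hom_braidWord]
    congr 1)

theorem nu_agen (s : α) : nu M (agen M s) = Multiplicative.ofAdd (1 : ℤ) :=
  PresentedGroup.toGroup.of _

theorem parabolic_infinite {S₁ : Set α} (hne : S₁.Nonempty) :
    ((standardParabolic M S₁ : Set (ArtinGroup M))).Infinite := by
  obtain ⟨s, hs⟩ := hne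
  have hmem : agen M s ∈ standardParabolic M S₁ :=
    Subgroup.subset_closure ⟨s, hs, rfl⟩
  refine Set.infinite_of_injective_forall_mem
    (f := fun n : ℤ => (agen M s) ^ n) ?_ (fun n => zpow_mem hmem n)
  intro a b hab
  have h2 : nu M ((agen M s) ^ a) = nu M ((agen M s) ^ b) := congrArg (nu M) hab
  rw [map_zpow, map_zpow, nu_agen] at h2
  have h3 := congrArg Multiplicative.toAdd h2
  simpa using h3

theorem commute_of_forall {S₁ : Set α} {t : α} (h : ∀ s ∈ S₁, M s t = 2) :
    ∀ x ∈ standardParabolic M S₁, agen M t * x = x * agen M t := by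
  intro x hx
  have hle : standardParabolic M S₁ ≤ Subgroup.centralizer {agen M t} := by
    rw [standardParabolic, Subgroup.closure_le]
    rintro _ ⟨s, hs, rfl⟩
    rw [SetLike.mem_coe, Subgroup.mem_centralizer_iff]
    rintro g hg
    rcases hg with rfl
    exact (agen_comm (h s hs)).symm
  exact Subgroup.mem_centralizer_iff.mp (hle hx) _ rfl

theorem parabolic_normal {S₁ : Set α} (hdf : ∀ s ∈ S₁, ∀ t ∉ S₁, M s t = 2) :
    (standardParabolic M S₁).Normal := by
  rw [← Subgroup.normalizer_eq_top_iff, eq_top_iff,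
    ← PresentedGroup.closure_range_of (artinRels M), Subgroup.closure_le]
  rintro _ ⟨t, rfl⟩
  by_cases ht : t ∈ S₁
  · exact Subgroup.le_normalizer (Subgroup.subset_closure ⟨t, ht, rfl⟩)
  · have key : ∀ x ∈ standardParabolic M S₁, agen M t * x = x * agen M t :=
      commute_of_forall (fun s hs => hdf s hs t ht)
    rw [SetLike.mem_coe, Subgroup.mem_normalizer_iff]
    intro h
    change h ∈ _ ↔ agen M t * h * (agen M t)⁻¹ ∈ _
    constructor
    · intro hh
      have hc := key h hh
      have h2 : agen M t * h * (agen M t)⁻¹ = h := by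
        rw [hc]; group
      rw [h2]; exact hh
    · intro hh
      have hc := key _ hh
      have h3 : agen M t * (agen M t * h * (agen M t)⁻¹) = agen M t * h := by
        rw [hc]; group
      have h2 := mul_left_cancel h3
      rw [← h2]; exact hh

theorem not_wm_of_directFactor {T : Set α}
    (hex : ∃ S₁ : Set α, IsDirectFactorSet M S₁ ∧
      standardParabolic M S₁ ≤ standardParabolic M T) :
    ¬ WeaklyMalnormal (standardParabolic M T) := by
  obtain ⟨S₁, ⟨hne, _, hdf⟩, hle⟩ := hex
  rintro ⟨g, hfin⟩
  have hnorm := parabolic_normal (M := M) hdf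
  have h1 : (standardParabolic M S₁ : Set (ArtinGroup M)) ⊆
      ((standardParabolic M T ⊓ conjSub g (standardParabolic M T) :
        Subgroup (ArtinGroup M)) : Set (ArtinGroup M)) := by
    intro x hx
    refine Subgroup.mem_inf.mpr ⟨hle hx, ?_⟩
    refine ⟨g⁻¹ * x * g, hle ?_, ?_⟩
    · have := hnorm.conj_mem x hx g⁻¹
      simpa using this
    · show (MulAut.conj g) (g⁻¹ * x * g) = x
      simp [MulAut.conj]
      group
  exact parabolic_infinite hne (hfin.subset h1)

theorem agen_braid_list {β : Type*} (M' : β → β → ℕ) (a b : β) (h2 : 2 ≤ M' a b) :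
    ((List.range (M' a b)).map
      (fun i => if i % 2 = 0 then agen M' a else agen M' b)).prod
      = ((List.range (M' a b)).map
        (fun i => if i % 2 = 0 then agen M' b else agen M' a)).prod := by
  have h := mk_braid_eq (M := M') h2
  rw [hom_braidWord, hom_braidWord] at h
  exact h

theorem parabolic_commute {U V : Set α} (h : ∀ s ∈ U, ∀ t ∈ V, M s t = 2) :
    ∀ x ∈ standardParabolic M U, ∀ y ∈ standardParabolic M V, Commute x y := by
  intro x hx y hy
  suffices hle : standardParabolic M V ≤
      Subgroup.centralizer (standardParabolic M U : Set (ArtinGroup M)) by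
    exact Subgroup.mem_centralizer_iff.mp (hle hy) x hx
  rw [standardParabolic, Subgroup.closure_le]
  rintro _ ⟨t, ht, rfl⟩
  rw [SetLike.mem_coe, Subgroup.mem_centralizer_iff]
  intro z hz
  exact (commute_of_forall (fun s hs => h s hs t ht) z hz).symm

end Basic

section Product

variable {α : Type*} {M : α → α → ℕ} {k : ℕ} {f : α → Fin k}

/-- The embedding `A_{Γᵢ} →* A_Γ` of the Artin group of the induced subgraph on the
`i`-th fiber. -/
theorem phi_rels (M : α → α → ℕ) (f : α → Fin k) (i : Fin k) :
    ∀ r ∈ artinRels (restrict M (f ⁻¹' {i})),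
      FreeGroup.lift (fun a : (f ⁻¹' {i} : Set α) => agen M (a : α)) r = 1 := by
  rintro r ⟨a, b, h2, rfl⟩
  rw [map_mul, map_inv, mul_inv_eq_one, hom_braidWord, hom_braidWord]
  simp only [FreeGroup.lift_apply_of]
  exact agen_braid_list M (a : α) (b : α) h2

noncomputable def phi (M : α → α → ℕ) (f : α → Fin k) (i : Fin k) :
    ArtinGroup (restrict M (f ⁻¹' {i})) →* ArtinGroup M :=
  PresentedGroup.toGroup (phi_rels M f i)

theorem phi_agen (i : Fin k) (a : f ⁻¹' {i}) :
    phi M f i (agen (restrict M (f ⁻¹' {i})) a) = agen M (a : α) := by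
  unfold phi agen
  exact PresentedGroup.toGroup.of _

theorem phi_map_parabolic (i : Fin k) (U : Set (f ⁻¹' {i})) :
    (standardParabolic (restrict M (f ⁻¹' {i})) U).map (phi M f i)
      = standardParabolic M (Subtype.val '' U) := by
  rw [standardParabolic, MonoidHom.map_closure, standardParabolic,
    ← Set.image_comp, ← Set.image_comp]
  exact congrArg Subgroup.closure (Set.image_congr (fun a _ => phi_agen i a))

theorem phi_range (i : Fin k) :
    (phi M f i).range = standardParabolic M (f ⁻¹' {i}) := by
  have h1 : (⊤ : Subgroup (ArtinGroup (restrict M (f ⁻¹' {i}))))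
      = standardParabolic (restrict M (f ⁻¹' {i})) Set.univ := by
    rw [standardParabolic, Set.image_univ,
      ← PresentedGroup.closure_range_of (artinRels (restrict M (f ⁻¹' {i})))]
    rfl
  rw [MonoidHom.range_eq_map, h1, phi_map_parabolic]
  congr 1
  exact Subtype.coe_image_univ _

theorem phi_pairwise_commute (hcross : ∀ s t : α, f s ≠ f t → M s t = 2) :
    Pairwise fun i j => ∀ x y, Commute (phi M f i x) (phi M f j y) := by
  intro i j hij x y
  have hx : phi M f i x ∈ standardParabolic M (f ⁻¹' {i}) := by
    rw [← phi_range]; exact ⟨x, rfl⟩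
  have hy : phi M f j y ∈ standardParabolic M (f ⁻¹' {j}) := by
    rw [← phi_range]; exact ⟨y, rfl⟩
  refine parabolic_commute (fun s hs t ht => hcross s t ?_) _ hx _ hy
  simp only [Set.mem_preimage, Set.mem_singleton_iff] at hs ht
  rw [hs, ht]; exact hij

theorem F_cast (M : α → α → ℕ) (f : α → Fin k) (t : α) (j : Fin k) (h : f t = j) :
    Pi.mulSingle (M := fun i => ArtinGroup (restrict M (f ⁻¹' {i}))) (f t)
        (agen (restrict M (f ⁻¹' {f t})) ⟨t, rfl⟩)
      = Pi.mulSingle j (agen (restrict M (f ⁻¹' {j})) ⟨t, h⟩) := by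
  subst h; rfl

theorem mulSingle_list_braid {ι : Type*} [DecidableEq ι] {G : ι → Type*} [∀ i, Group (G i)]
    (j : ι) (x y : G j) (m : ℕ) :
    ((List.range m).map
      (fun i => if i % 2 = 0 then Pi.mulSingle j x else Pi.mulSingle j y)).prod
      = Pi.mulSingle j (((List.range m).map (fun i => if i % 2 = 0 then x else y)).prod) := by
  have h0 : Pi.mulSingle j (((List.range m).map (fun i => if i % 2 = 0 then x else y)).prod)
      = (MonoidHom.mulSingle G j)
          (((List.range m).map (fun i => if i % 2 = 0 then x else y)).prod) := rfl
  rw [h0, map_list_prod, List.map_map]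
  refine congrArg List.prod (List.map_congr_left ?_)
  intro i _
  by_cases h : i % 2 = 0 <;> simp [h]

theorem Phi_rels (hcross : ∀ s t : α, f s ≠ f t → M s t = 2) :
    ∀ r ∈ artinRels M,
      FreeGroup.lift
        (fun s : α => Pi.mulSingle (M := fun i => ArtinGroup (restrict M (f ⁻¹' {i})))
          (f s) (agen (restrict M (f ⁻¹' {f s})) ⟨s, rfl⟩)) r = 1 := by
  rintro r ⟨s, t, h2, rfl⟩
  rw [map_mul, map_inv, mul_inv_eq_one]
  by_cases hft : f s = f t
  · rw [hom_braidWord, hom_braidWord]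
    simp only [FreeGroup.lift_apply_of]
    simp only [F_cast M f t (f s) hft.symm]
    rw [mulSingle_list_braid, mulSingle_list_braid]
    refine congrArg _ ?_
    exact agen_braid_list (restrict M (f ⁻¹' {f s})) ⟨s, rfl⟩ ⟨t, hft.symm⟩ h2
  · have h22 : M s t = 2 := hcross s t hft
    rw [h22, braidWord_two, braidWord_two, map_mul, map_mul]
    simp only [FreeGroup.lift_apply_of]
    exact (Pi.mulSingle_commute hft _ _).eq

/-- The homomorphism `A_Γ → ∏ᵢ A_{Γᵢ}`. -/
noncomputable def Phi (hcross : ∀ s t : α, f s ≠ f t → M s t = 2) :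
    ArtinGroup M →* ∀ i, ArtinGroup (restrict M (f ⁻¹' {i})) :=
  PresentedGroup.toGroup (Phi_rels hcross)

theorem Phi_agen (hcross : ∀ s t : α, f s ≠ f t → M s t = 2) (s : α) :
    Phi hcross (agen M s)
      = Pi.mulSingle (M := fun i => ArtinGroup (restrict M (f ⁻¹' {i})))
          (f s) (agen (restrict M (f ⁻¹' {f s})) ⟨s, rfl⟩) := by
  unfold Phi agen
  exact PresentedGroup.toGroup.of _

/-- The homomorphism `∏ᵢ A_{Γᵢ} → A_Γ`. -/
noncomputable def Psi (hcross : ∀ s t : α, f s ≠ f t → M s t = 2) :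
    (∀ i, ArtinGroup (restrict M (f ⁻¹' {i}))) →* ArtinGroup M :=
  MonoidHom.noncommPiCoprod (fun i => phi M f i) (phi_pairwise_commute hcross)

theorem Psi_mulSingle (hcross : ∀ s t : α, f s ≠ f t → M s t = 2) (i : Fin k)
    (x : ArtinGroup (restrict M (f ⁻¹' {i}))) :
    Psi hcross (Pi.mulSingle i x) = phi M f i x :=
  MonoidHom.noncommPiCoprod_mulSingle _ _ _

theorem Psi_Phi (hcross : ∀ s t : α, f s ≠ f t → M s t = 2) :
    (Psi hcross).comp (Phi hcross) = MonoidHom.id _ := by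
  apply PresentedGroup.ext
  intro s
  show Psi hcross (Phi hcross (agen M s)) = agen M s
  rw [Phi_agen, Psi_mulSingle]
  exact phi_agen _ _

theorem Phi_phi (hcross : ∀ s t : α, f s ≠ f t → M s t = 2) (i : Fin k)
    (x : ArtinGroup (restrict M (f ⁻¹' {i}))) :
    Phi hcross (phi M f i x) = Pi.mulSingle i x := by
  have h : (Phi hcross).comp (phi M f i)
      = MonoidHom.mulSingle (fun i => ArtinGroup (restrict M (f ⁻¹' {i}))) i := by
    apply PresentedGroup.ext
    intro a
    show Phi hcross (phi M f i (agen _ a)) = Pi.mulSingle i (agen _ a)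
    rw [phi_agen, Phi_agen]
    rw [F_cast M f (↑a) i a.2]
  exact DFunLike.congr_fun h x

theorem Phi_Psi (hcross : ∀ s t : α, f s ≠ f t → M s t = 2) :
    (Phi hcross).comp (Psi hcross) = MonoidHom.id _ := by
  apply MonoidHom.pi_ext
  intro i x
  show Phi hcross (Psi hcross (Pi.mulSingle i x)) = Pi.mulSingle i x
  rw [Psi_mulSingle]
  exact Phi_phi hcross i x

/-- The isomorphism `A_Γ ≅ ∏ᵢ A_{Γᵢ}`. -/
noncomputable def artinPiEquiv (hcross : ∀ s t : α, f s ≠ f t → M s t = 2) :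
    ArtinGroup M ≃* ∀ i, ArtinGroup (restrict M (f ⁻¹' {i})) :=
  MonoidHom.toMulEquiv (Phi hcross) (Psi hcross) (Psi_Phi hcross) (Phi_Psi hcross)

theorem Phi_map_parabolic (hcross : ∀ s t : α, f s ≠ f t → M s t = 2) (T : Set α) :
    (standardParabolic M T).map (Phi hcross)
      = Subgroup.pi Set.univ
          (fun i => standardParabolic (restrict M (f ⁻¹' {i})) (Subtype.val ⁻¹' T)) := by
  apply le_antisymm
  · rw [standardParabolic, MonoidHom.map_closure, Subgroup.closure_le]
    rintro _ ⟨_, ⟨s, hs, rfl⟩, rfl⟩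
    rw [SetLike.mem_coe, Subgroup.mem_pi]
    intro j _
    rw [Phi_agen]
    by_cases hj : j = f s
    · subst hj
      rw [Pi.mulSingle_eq_same]
      exact Subgroup.subset_closure ⟨⟨s, rfl⟩, hs, rfl⟩
    · rw [Pi.mulSingle_eq_of_ne hj]
      exact one_mem _
  · intro x hx
    have hx' : ∀ i, x i ∈ standardParabolic (restrict M (f ⁻¹' {i})) (Subtype.val ⁻¹' T) :=
      fun i => hx i (Set.mem_univ i)
    rw [← Finset.noncommProd_mulSingle x]
    refine Subgroup.noncommProd_mem _ _ ?_
    intro i _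
    refine Subgroup.mem_map.mpr ⟨phi M f i (x i), ?_, Phi_phi hcross i (x i)⟩
    have h1 : phi M f i (x i) ∈
        (standardParabolic (restrict M (f ⁻¹' {i})) (Subtype.val ⁻¹' T)).map (phi M f i) :=
      ⟨x i, hx' i, rfl⟩
    rw [phi_map_parabolic] at h1
    exact Subgroup.closure_mono
      (Set.image_mono  (Set.image_preimage_subset _ _)) h1

end Product

section Transfer

theorem conj_pi {η : Type*} {G : η → Type*} [∀ i, Group (G i)]
    (g : ∀ i, G i) (H : ∀ i, Subgroup (G i)) :
    conjSub g (Subgroup.pi Set.univ H)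
      = Subgroup.pi Set.univ (fun i => conjSub (g i) (H i)) := by
  ext x
  simp only [conjSub, Subgroup.mem_map, Subgroup.mem_pi, Set.mem_univ, forall_true_left,
    MulEquiv.toMonoidHom_eq_coe, MonoidHom.coe_coe, MulAut.conj_apply]
  constructor
  · rintro ⟨y, hy, rfl⟩ i
    exact ⟨y i, hy i, rfl⟩
  · intro h
    choose y hy hxy using h
    exact ⟨y, hy, funext hxy⟩

theorem weaklyMalnormal_pi {η : Type*} [Fintype η] {G : η → Type*} [∀ i, Group (G i)]
    (P : ∀ i, Subgroup (G i)) (h : ∀ i, WeaklyMalnormal (P i)) :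
    WeaklyMalnormal (Subgroup.pi Set.univ P) := by
  choose g hg using h
  refine ⟨g, ?_⟩
  have h1 : (Subgroup.pi Set.univ P ⊓ conjSub g (Subgroup.pi Set.univ P))
      = Subgroup.pi Set.univ (fun i => P i ⊓ conjSub (g i) (P i)) := by
    rw [conj_pi]
    ext x
    simp only [Subgroup.mem_inf, Subgroup.mem_pi, Set.mem_univ, forall_true_left]
    exact ⟨fun ⟨h1, h2⟩ i => ⟨h1 i, h2 i⟩, fun h => ⟨fun i => (h i).1, fun i => (h i).2⟩⟩
  rw [h1, Subgroup.coe_pi]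
  exact Set.Finite.pi hg

theorem map_conjSub {G G' : Type*} [Group G] [Group G'] (e : G ≃* G') (g : G)
    (H : Subgroup G) :
    (conjSub g H).map e.toMonoidHom = conjSub (e g) (H.map e.toMonoidHom) := by
  ext x
  simp only [conjSub, Subgroup.mem_map, MulEquiv.toMonoidHom_eq_coe, MonoidHom.coe_coe,
    MulAut.conj_apply]
  constructor
  · rintro ⟨_, ⟨h, hh, rfl⟩, rfl⟩
    exact ⟨e h, ⟨h, hh, rfl⟩, by simp [map_mul]⟩
  · rintro ⟨_, ⟨h, hh, rfl⟩, rfl⟩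
    exact ⟨g * h * g⁻¹, ⟨h, hh, rfl⟩, by simp [map_mul]⟩

theorem weaklyMalnormal_of_equiv {G G' : Type*} [Group G] [Group G'] (e : G ≃* G')
    (H : Subgroup G) (h : WeaklyMalnormal (H.map e.toMonoidHom)) :
    WeaklyMalnormal H := by
  obtain ⟨g', hfin⟩ := h
  refine ⟨e.symm g', ?_⟩
  have hinj : Function.Injective e.toMonoidHom := e.injective
  have h1 : (H ⊓ conjSub (e.symm g') H).map e.toMonoidHom
      = H.map e.toMonoidHom ⊓ conjSub g' (H.map e.toMonoidHom) := by
    rw [Subgroup.map_inf _ _ _ hinj, map_conjSub, MulEquiv.apply_symm_apply]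
  have himg : (⇑e.toMonoidHom ''
      ((H ⊓ conjSub (e.symm g') H : Subgroup G) : Set G)).Finite := by
    rw [← Subgroup.coe_map, h1]
    exact hfin
  exact Set.Finite.of_finite_image himg hinj.injOn

theorem artin_subsingleton {β : Type*} [IsEmpty β] (M' : β → β → ℕ) :
    Subsingleton (ArtinGroup M') := by
  constructor
  intro a b
  obtain ⟨x, rfl⟩ := PresentedGroup.mk_surjective _ a
  obtain ⟨y, rfl⟩ := PresentedGroup.mk_surjective _ b
  congr 1
  exact Subsingleton.elim x y

end Transfer

/-- If the vertex set decomposes as a disjoint union of parts (fibers of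
`f : α → Fin k`), any two vertices in different parts joined by an edge labelled `2`, and
every part spans an irreducible Artin group satisfying the Weak Malnormality Conjecture,
then the direct product `A_Γ ≅ A_{Γ₁} × ⋯ × A_{Γ_k}` also satisfies the
Weak Malnormality Conjecture. -/
theorem satisfiesWMC_of_product {α : Type*} [Fintype α] (M : α → α → ℕ)
    (hsym : ∀ s t, M s t = M t s) (hdiag : ∀ s, M s s = 0)
    (hlab : ∀ s t, s ≠ t → M s t = 0 ∨ 2 ≤ M s t)
    (k : ℕ) (f : α → Fin k)
    (hcross : ∀ s t : α, f s ≠ f t → M s t = 2)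
    (hirr : ∀ i : Fin k, ¬ IsReducible (restrict M (f ⁻¹' {i})))
    (hwmc : ∀ i : Fin k, SatisfiesWMC (restrict M (f ⁻¹' {i}))) :
    SatisfiesWMC M := by
  classical
  intro T hT
  constructor
  · intro hwm hex
    exact not_wm_of_directFactor hex hwm
  · intro hno
    have hwm_i : ∀ i : Fin k,
        WeaklyMalnormal (standardParabolic (restrict M (f ⁻¹' {i})) (Subtype.val ⁻¹' T)) := by
      intro i
      by_cases hemp : Nonempty (f ⁻¹' {i} : Set α)
      · have hTi : (Subtype.val ⁻¹' T : Set (f ⁻¹' {i})) ≠ Set.univ := by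
          intro hTi
          have hsub : (f ⁻¹' {i} : Set α) ⊆ T := by
            intro s hs
            have h3 : (⟨s, hs⟩ : (f ⁻¹' {i} : Set α)) ∈
                (Subtype.val ⁻¹' T : Set (f ⁻¹' {i})) := by
              rw [hTi]; trivial
            exact h3
          refine hno ⟨f ⁻¹' {i}, ⟨?_, ?_, ?_⟩, ?_⟩
          · obtain ⟨a⟩ := hemp; exact ⟨a, a.2⟩
          · intro huniv
            exact hT (Set.eq_univ_of_univ_subset (huniv ▸ hsub))
          · intro s hs t ht
            refine hcross s t ?_
            simp only [Set.mem_preimage, Set.mem_singleton_iff] at hs ht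
            rw [hs]; exact fun h => ht h.symm
          · exact Subgroup.closure_mono (Set.image_mono  hsub)
        have hno_i : ¬ ∃ S₁' : Set (f ⁻¹' {i} : Set α),
            IsDirectFactorSet (restrict M (f ⁻¹' {i})) S₁' ∧
              standardParabolic (restrict M (f ⁻¹' {i})) S₁'
                ≤ standardParabolic (restrict M (f ⁻¹' {i})) (Subtype.val ⁻¹' T) := by
          rintro ⟨S₁', ⟨hne', hnu', hdf'⟩, hle'⟩
          refine hno ⟨Subtype.val '' S₁', ⟨?_, ?_, ?_⟩, ?_⟩
          · obtain ⟨a, ha⟩ := hne'; exact ⟨a, a, ha, rfl⟩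
          · intro huniv
            apply hnu'
            apply Set.eq_univ_of_forall
            intro a
            have h4 : (a : α) ∈ Subtype.val '' S₁' := by rw [huniv]; trivial
            obtain ⟨b, hb, hba⟩ := h4
            exact (Subtype.ext hba : b = a) ▸ hb
          · rintro _ ⟨a, ha, rfl⟩ t ht
            by_cases htf : f t = i
            · have htS : (⟨t, htf⟩ : (f ⁻¹' {i} : Set α)) ∉ S₁' :=
                fun hmem => ht ⟨_, hmem, rfl⟩
              exact hdf' a ha ⟨t, htf⟩ htS
            · refine hcross _ t ?_
              have h5 : f (a : α) = i := a.2
              rw [h5]; exact fun h => htf h.symm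
          · have h1 := Subgroup.map_mono (f := phi M f i) hle'
            rw [phi_map_parabolic, phi_map_parabolic] at h1
            exact h1.trans (Subgroup.closure_mono
              (Set.image_mono  (Set.image_preimage_subset _ _)))
        exact ((hwmc i) _ hTi).mpr hno_i
      · haveI : IsEmpty (f ⁻¹' {i} : Set α) := not_nonempty_iff.mp hemp
        haveI := artin_subsingleton (restrict M (f ⁻¹' {i}))
        exact ⟨1, Set.Subsingleton.finite Set.subsingleton_of_subsingleton⟩
    apply weaklyMalnormal_of_equiv (artinPiEquiv hcross)
    have he : (artinPiEquiv hcross).toMonoidHom = Phi (M := M) (f := f) hcross := rfl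
    rw [he, Phi_map_parabolic]
    exact weaklyMalnormal_pi _ hwm_i

end ArtinPaper
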